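/- Let W be the Weyl group of a crystallographic root system with positive roots R⁺, let w ∈ W, and suppose β ∈ R⁺ satisfies v⁻¹(β) ∈ R⁺ for every v ≤ w in Bruhat order. If α is a simple root with ℓ(s_α w) = ℓ(w) - 1, then β ≠ α, and moreover for every v' ≤ s_α w, both (v')⁻¹(β) and (v')⁻¹(s_α(β)) are positive roots. -/

import Mathlib

/-!
Write `s_α` for the simple reflection. Because `s_α w = w s_{w⁻¹α}` is shorter than `w`, it is a
Bruhat predecessor of `w`, so every `v' ≤ s_α w` also satisfies `v' ≤ w`. By the lifting property,
`s_α v' ≤ w` or `s_α v' ≤ s_α w`, so `s_α v' ≤ w` in both cases, and the hypothesis applied to `v'`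
and to `s_α v'` gives the positivity of `v'⁻¹β` and of `v'⁻¹(s_α β) = (s_α v')⁻¹β`. If `β = α`, the
hypothesis for `v = w` makes `w⁻¹α` positive, which would make `s_α w` longer than `w`.

Lifting and the length comparisons rest on the exchange inequality `ℓ(u s_γ) < ℓ(u)` for `γ > 0`
with `uγ < 0`, proved by induction on `ℓ(u)` using only that a simple reflection `s_α` permutes the
positive roots other than `α`.
-/

open scoped InnerProductSpace

variable {V : Type*} [NormedAddCommGroup V] [InnerProductSpace ℝ V]

/-- The Cartan integer `⟨β, α∨⟩ = 2(β,α)/(α,α)`. -/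
noncomputable def cartanInt (β α : V) : ℝ := 2 * ⟪β, α⟫_ℝ / ⟪α, α⟫_ℝ

/-- The reflection in the root `α`, as a function. -/
noncomputable def preRefl (α v : V) : V := v - cartanInt v α • α

/-- A (reduced, crystallographic) root system in a real inner product space. -/
structure IsRootSystem (R : Set V) : Prop where
  finite : R.Finite
  nonempty : R.Nonempty
  ne_zero : ∀ α ∈ R, α ≠ 0
  reflect_mem : ∀ α ∈ R, ∀ β ∈ R, preRefl α β ∈ R
  crystallographic : ∀ α ∈ R, ∀ β ∈ R, ∃ n : ℤ, cartanInt β α = (n : ℝ)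
  reduced : ∀ α ∈ R, ∀ t : ℝ, t • α ∈ R → t = 1 ∨ t = -1

/-- `β` is a nonnegative integer combination of elements of `S`. -/
def NonnegComb (S : Set V) (β : V) : Prop :=
  ∃ c : V →₀ ℕ, ↑c.support ⊆ S ∧ β = c.sum fun v n => (n : ℝ) • v

/-- `β` is an integer combination of elements of `S`. -/
def IntComb (S : Set V) (β : V) : Prop :=
  ∃ c : V →₀ ℤ, ↑c.support ⊆ S ∧ β = c.sum fun v n => (n : ℝ) • v

/-- `S` is a base (set of simple roots) of the root system `R`. -/
structure IsBase (R S : Set V) : Prop where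
  subset : S ⊆ R
  indep : LinearIndependent ℝ ((↑) : S → V)
  pos_or_neg : ∀ β ∈ R, NonnegComb S β ∨ NonnegComb S (-β)

/-- All roots have the same length. -/
def IsSimplyLaced (R : Set V) : Prop := ∀ α ∈ R, ∀ β ∈ R, ‖α‖ = ‖β‖

/-- `R` is irreducible: it admits no orthogonal decomposition. -/
def IsIrreducibleRS (R : Set V) : Prop :=
  ∀ R₁ R₂ : Set V, R = R₁ ∪ R₂ → (∀ a ∈ R₁, ∀ b ∈ R₂, ⟪a, b⟫_ℝ = 0) →
    R₁ = ∅ ∨ R₂ = ∅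

/-- `β` is a short root (of minimal length). -/
def IsShort (R : Set V) (β : V) : Prop := β ∈ R ∧ ∀ γ ∈ R, ‖β‖ ≤ ‖γ‖

/-- `β` is a long root (of maximal length). -/
def IsLong (R : Set V) (β : V) : Prop := β ∈ R ∧ ∀ γ ∈ R, ‖γ‖ ≤ ‖β‖

/-- `α₀` is the highest root w.r.t. the base `S`. -/
def IsHighestRoot (R S : Set V) (α₀ : V) : Prop :=
  α₀ ∈ R ∧ ∀ β ∈ R, NonnegComb S (α₀ - β)

/-- `β₀` is the highest short root w.r.t. the base `S`. -/
def IsHighestShortRoot (R S : Set V) (β₀ : V) : Prop :=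
  IsShort R β₀ ∧ ∀ β, IsShort R β → NonnegComb S (β₀ - β)

/-- The Weyl group of `R`, as the subgroup of linear automorphisms generated by the
reflections in the roots. -/
def WeylGroup (R : Set V) : Subgroup (V ≃ₗ[ℝ] V) :=
  Subgroup.closure {g | ∃ α ∈ R, ∀ v, g v = preRefl α v}

/-- The length of `w`: the number of positive roots sent to negative roots. -/
noncomputable def invLength (R S : Set V) (w : V ≃ₗ[ℝ] V) : ℕ :=
  {β | β ∈ R ∧ NonnegComb S β ∧ NonnegComb S (-(w β))}.ncard

/-- One step in the Bruhat order: multiply by a reflection and increase length. -/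
def BruhatStep (R S : Set V) (u v : V ≃ₗ[ℝ] V) : Prop :=
  ∃ t : V ≃ₗ[ℝ] V, (∃ β ∈ R, ∀ x, t x = preRefl β x) ∧ v = u * t ∧
    invLength R S u < invLength R S v

/-- The Bruhat order on the Weyl group. -/
def BruhatLE (R S : Set V) : (V ≃ₗ[ℝ] V) → (V ≃ₗ[ℝ] V) → Prop :=
  Relation.ReflTransGen (BruhatStep R S)

lemma preRefl_of_eq_zero {γ : V} (hγ : γ = 0) (v : V) : preRefl γ v = v := by
  simp [preRefl, cartanInt, hγ]

lemma preRefl_preRefl (γ v : V) : preRefl γ (preRefl γ v) = v := by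
  rcases eq_or_ne γ 0 with hγ | hγ
  · rw [preRefl_of_eq_zero hγ, preRefl_of_eq_zero hγ]
  have hγγ : ⟪γ, γ⟫_ℝ ≠ 0 := inner_self_ne_zero.mpr hγ
  have hcoeff : 2 * ⟪v - (2 * ⟪v, γ⟫_ℝ / ⟪γ, γ⟫_ℝ) • γ, γ⟫_ℝ / ⟪γ, γ⟫_ℝ =
      -(2 * ⟪v, γ⟫_ℝ / ⟪γ, γ⟫_ℝ) := by
    rw [inner_sub_left, real_inner_smul_left]
    field_simp
    ring
  rw [preRefl, cartanInt, preRefl, cartanInt, hcoeff, neg_smul, sub_neg_eq_add, sub_add_cancel]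

lemma preRefl_self (γ : V) : preRefl γ γ = -γ := by
  rcases eq_or_ne γ 0 with hγ | hγ
  · simp [preRefl, hγ]
  have hγγ : ⟪γ, γ⟫_ℝ ≠ 0 := inner_self_ne_zero.mpr hγ
  rw [preRefl, cartanInt, mul_div_assoc, div_self hγγ, mul_one, two_smul, sub_add_cancel_left]

lemma preRefl_neg (γ v : V) : preRefl (-γ) v = preRefl γ v := by
  simp [preRefl, cartanInt, neg_div]

lemma inner_preRefl_preRefl (γ x y : V) : ⟪preRefl γ x, preRefl γ y⟫_ℝ = ⟪x, y⟫_ℝ := by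
  rcases eq_or_ne γ 0 with hγ | hγ
  · rw [preRefl_of_eq_zero hγ, preRefl_of_eq_zero hγ]
  have hγγ : ⟪γ, γ⟫_ℝ ≠ 0 := inner_self_ne_zero.mpr hγ
  simp only [preRefl, cartanInt, inner_sub_left, inner_sub_right, real_inner_smul_left,
    real_inner_smul_right, real_inner_comm γ y]
  field_simp
  ring

noncomputable def reflEquiv (γ : V) : V ≃ₗ[ℝ] V :=
  LinearEquiv.ofInvolutive
    { toFun := preRefl γ
      map_add' := fun x y => by
        simp only [preRefl, cartanInt, inner_add_left, mul_add, add_div, add_smul]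
        abel
      map_smul' := fun r x => by
        simp only [preRefl, cartanInt, real_inner_smul_left, RingHom.id_apply, smul_sub,
          smul_smul]
        ring_nf }
    (preRefl_preRefl γ)

@[simp] lemma reflEquiv_apply (γ v : V) : reflEquiv γ v = preRefl γ v := rfl

lemma reflEquiv_neg (γ : V) : reflEquiv (-γ) = reflEquiv γ :=
  LinearEquiv.ext (preRefl_neg γ)

lemma reflEquiv_mul_self (γ : V) : reflEquiv γ * reflEquiv γ = 1 :=
  LinearEquiv.ext (preRefl_preRefl γ)

lemma mul_reflEquiv_mul_reflEquiv (u : V ≃ₗ[ℝ] V) (γ : V) :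
    u * reflEquiv γ * reflEquiv γ = u := by
  rw [mul_assoc, reflEquiv_mul_self, mul_one]

lemma reflEquiv_mul_reflEquiv_mul (γ : V) (u : V ≃ₗ[ℝ] V) :
    reflEquiv γ * (reflEquiv γ * u) = u := by
  rw [← mul_assoc, reflEquiv_mul_self, one_mul]

lemma reflEquiv_eq_of_forall {γ : V} {s : V ≃ₗ[ℝ] V} (hs : ∀ v, s v = preRefl γ v) :
    s = reflEquiv γ :=
  LinearEquiv.ext hs

lemma reflEquiv_map_mul {u : V ≃ₗ[ℝ] V} (hu : ∀ x y, ⟪u x, u y⟫_ℝ = ⟪x, y⟫_ℝ) (γ : V) :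
    reflEquiv (u γ) * u = u * reflEquiv γ := by
  ext x
  simp only [LinearEquiv.mul_apply, reflEquiv_apply, preRefl, cartanInt, map_sub, map_smul, hu]

lemma reflEquiv_preRefl (α γ : V) :
    reflEquiv (preRefl α γ) = reflEquiv α * reflEquiv γ * reflEquiv α := by
  rw [← reflEquiv_apply, ← reflEquiv_map_mul (u := reflEquiv α) (inner_preRefl_preRefl α),
    mul_reflEquiv_mul_reflEquiv]

lemma reflEquiv_mem_weylGroup {R : Set V} {γ : V} (hγ : γ ∈ R) : reflEquiv γ ∈ WeylGroup R :=
  Subgroup.subset_closure ⟨γ, hγ, fun _ => rfl⟩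

@[elab_as_elim]
lemma WeylGroup.induction {R : Set V} {p : (u : V ≃ₗ[ℝ] V) → u ∈ WeylGroup R → Prop}
    (refl : ∀ γ (hγ : γ ∈ R), p (reflEquiv γ) (reflEquiv_mem_weylGroup hγ)) (one : p 1 (one_mem _))
    (mul : ∀ u v hu hv, p u hu → p v hv → p (u * v) (mul_mem hu hv))
    {u : V ≃ₗ[ℝ] V} (hu : u ∈ WeylGroup R) : p u hu := by
  induction hu using Subgroup.closure_induction'' with
  | mem g hg =>
    obtain ⟨γ, hγ, hgγ⟩ := hg
    obtain rfl := reflEquiv_eq_of_forall hgγ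
    exact refl γ hγ
  | inv_mem g hg =>
    obtain ⟨γ, hγ, hgγ⟩ := hg
    obtain rfl := reflEquiv_eq_of_forall hgγ
    simpa only [inv_eq_of_mul_eq_one_right (reflEquiv_mul_self γ)] using refl γ hγ
  | one => exact one
  | mul u v _ _ hu hv => exact mul u v _ _ hu hv

lemma inner_map_map_of_mem_weylGroup {R : Set V} {u : V ≃ₗ[ℝ] V} (hu : u ∈ WeylGroup R)
    (x y : V) : ⟪u x, u y⟫_ℝ = ⟪x, y⟫_ℝ := by
  induction hu using WeylGroup.induction generalizing x y with
  | refl γ _ => exact inner_preRefl_preRefl γ x y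
  | one => rfl
  | mul u v _ _ hu hv => rw [LinearEquiv.mul_apply, LinearEquiv.mul_apply, hu, hv]

lemma map_mem_of_mem_weylGroup {R : Set V} (hR : IsRootSystem R) {u : V ≃ₗ[ℝ] V}
    (hu : u ∈ WeylGroup R) {β : V} (hβ : β ∈ R) : u β ∈ R := by
  induction hu using WeylGroup.induction generalizing β with
  | refl γ hγ => exact hR.reflect_mem γ hγ β hβ
  | one => exact hβ
  | mul u v _ _ hu hv => exact hu (hv hβ)

lemma symm_map_mem_of_mem_weylGroup {R : Set V} (hR : IsRootSystem R) {u : V ≃ₗ[ℝ] V}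
    (hu : u ∈ WeylGroup R) {β : V} (hβ : β ∈ R) : u.symm β ∈ R :=
  map_mem_of_mem_weylGroup hR (inv_mem hu) hβ

lemma neg_mem_of_isRootSystem {R : Set V} (hR : IsRootSystem R) {β : V} (hβ : β ∈ R) : -β ∈ R :=
  preRefl_self β ▸ hR.reflect_mem β hβ β hβ

section NonnegComb

variable {S : Set V}

lemma nonnegComb_iff_mem_span {β : V} : NonnegComb S β ↔ β ∈ Submodule.span ℕ S := by
  simp only [NonnegComb, Submodule.mem_span_set, Nat.cast_smul_eq_nsmul, eq_comm]

lemma nonnegComb_of_mem {α : V} (hα : α ∈ S) : NonnegComb S α :=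
  nonnegComb_iff_mem_span.mpr (Submodule.subset_span hα)

lemma NonnegComb.add {β γ : V} (hβ : NonnegComb S β) (hγ : NonnegComb S γ) :
    NonnegComb S (β + γ) := by
  rw [nonnegComb_iff_mem_span] at *
  exact add_mem hβ hγ

lemma NonnegComb.nsmul {β : V} (hβ : NonnegComb S β) (n : ℕ) : NonnegComb S (n • β) := by
  rw [nonnegComb_iff_mem_span] at *
  exact Submodule.smul_mem _ n hβ

lemma NonnegComb.map {u : V ≃ₗ[ℝ] V} (hu : ∀ α ∈ S, NonnegComb S (u α)) {β : V}
    (hβ : NonnegComb S β) : NonnegComb S (u β) := by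
  simp only [nonnegComb_iff_mem_span] at *
  have hle : Submodule.span ℕ S ≤ (Submodule.span ℕ S).comap (u.toLinearMap.restrictScalars ℕ) :=
    Submodule.span_le.mpr hu
  exact hle hβ

variable (hind : LinearIndependent ℝ ((↑) : S → V))
include hind

lemma nonnegComb_coeff_eq {c d : V →₀ ℕ} (hc : c ∈ Finsupp.supported ℕ ℕ S)
    (hd : d ∈ Finsupp.supported ℕ ℕ S)
    (h : (c.sum fun v n => n • v) = d.sum fun v n => n • v) : c = d := by
  have hindℕ : LinearIndepOn ℕ id S := hind.restrict_scalars' ℕ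
  exact linearIndepOn_iffₛ.mp hindℕ c hc d hd (by
    simpa only [Finsupp.linearCombination_apply, id] using h)

lemma eq_zero_of_nonnegComb_of_nonnegComb_neg {β : V} (h₁ : NonnegComb S β)
    (h₂ : NonnegComb S (-β)) : β = 0 := by
  obtain ⟨c, hc, rfl⟩ := Submodule.mem_span_set.mp (nonnegComb_iff_mem_span.mp h₁)
  obtain ⟨d, hd, hd'⟩ := Submodule.mem_span_set.mp (nonnegComb_iff_mem_span.mp h₂)
  have hcd : c + d = 0 := by
    refine nonnegComb_coeff_eq hind (add_mem hc hd) (zero_mem _) ?_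
    rw [Finsupp.sum_add_index' (by simp) (by simp [add_smul]), hd', add_neg_cancel,
        Finsupp.sum_zero_index]
  simp [(add_eq_zero.mp hcd).1]

lemma exists_eq_nsmul_of_nonnegComb_of_nonnegComb_sub {α β : V} (hα : α ∈ S) (n : ℕ)
    (h₁ : NonnegComb S β) (h₂ : NonnegComb S (n • α - β)) : ∃ m : ℕ, β = m • α := by
  classical
  obtain ⟨c, hc, rfl⟩ := Submodule.mem_span_set.mp (nonnegComb_iff_mem_span.mp h₁)
  obtain ⟨d, hd, hd'⟩ := Submodule.mem_span_set.mp (nonnegComb_iff_mem_span.mp h₂)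
  have hcd : c + d = Finsupp.single α n := by
    refine nonnegComb_coeff_eq hind (add_mem hc hd) (Finsupp.single_mem_supported ℕ n hα) ?_
    rw [Finsupp.sum_add_index' (by simp) (by simp [add_smul]), hd', add_sub_cancel,
        Finsupp.sum_single_index (zero_nsmul α)]
  refine ⟨c α, Finsupp.sum_eq_single α (fun v _ hv => ?_) (by simp)⟩
  have hv' := DFunLike.congr_fun hcd v
  rw [Finsupp.add_apply, Finsupp.single_eq_of_ne hv] at hv'
  simp [(add_eq_zero.mp hv').1]

end NonnegComb

section PositiveRoots

variable {R S : Set V} (hR : IsRootSystem R) (hS : IsBase R S)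
include hR hS

lemma IsBase.not_nonnegComb_neg {β : V} (hβ : β ∈ R) (hpos : NonnegComb S β) :
    ¬NonnegComb S (-β) :=
  fun hneg => hR.ne_zero β hβ (eq_zero_of_nonnegComb_of_nonnegComb_neg hS.indep hpos hneg)

lemma IsBase.nonnegComb_preRefl {α β : V} (hα : α ∈ S) (hβ : β ∈ R) (hpos : NonnegComb S β)
    (hne : β ≠ α) : NonnegComb S (preRefl α β) := by
  have hαR := hS.subset hα
  have hmem := hR.reflect_mem α hαR β hβ
  refine (hS.pos_or_neg _ hmem).resolve_right fun hneg => ?_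
  obtain ⟨k, hk⟩ := hR.crystallographic α hαR β hβ
  have hrefl : preRefl α β = β - (k : ℝ) • α := by rw [preRefl, hk]
  obtain ⟨n, rfl | rfl⟩ := Int.eq_nat_or_neg k
  · rw [hrefl, neg_sub, Int.cast_natCast, Nat.cast_smul_eq_nsmul] at hneg
    obtain ⟨m, rfl⟩ := exists_eq_nsmul_of_nonnegComb_of_nonnegComb_sub hS.indep hα n hpos hneg
    rw [← Nat.cast_smul_eq_nsmul ℝ] at hβ hne
    rcases hR.reduced α hαR m hβ with h | h
    · exact hne (by rw [h, one_smul])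
    · linarith [Nat.cast_nonneg (α := ℝ) m]
  · have hnn : NonnegComb S (preRefl α β) := by
      rw [hrefl, Int.cast_neg, Int.cast_natCast, neg_smul, sub_neg_eq_add, Nat.cast_smul_eq_nsmul]
      exact hpos.add ((nonnegComb_of_mem hα).nsmul n)
    exact hS.not_nonnegComb_neg hR hmem hnn hneg

lemma IsBase.exists_simple_nonnegComb_neg {u : V ≃ₗ[ℝ] V} (hu : u ∈ WeylGroup R) {γ : V}
    (hγ : γ ∈ R) (hpos : NonnegComb S γ) (hneg : NonnegComb S (-(u γ))) :
    ∃ α ∈ S, NonnegComb S (-(u α)) := by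
  by_contra! h
  have hsimple : ∀ α ∈ S, NonnegComb S (u α) := fun α hα =>
    (hS.pos_or_neg _ (map_mem_of_mem_weylGroup hR hu (hS.subset hα))).resolve_right (h α hα)
  exact hS.not_nonnegComb_neg hR (map_mem_of_mem_weylGroup hR hu hγ) (hpos.map hsimple) hneg

end PositiveRoots

def invSet (R S : Set V) (u : V ≃ₗ[ℝ] V) : Set V :=
  {β | β ∈ R ∧ NonnegComb S β ∧ NonnegComb S (-(u β))}

lemma invLength_eq_ncard_invSet (R S : Set V) (u : V ≃ₗ[ℝ] V) :
    invLength R S u = (invSet R S u).ncard :=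
  rfl

section InvSet

variable {R S : Set V} (hR : IsRootSystem R) (hS : IsBase R S)
include hR hS

lemma mapsTo_preRefl_invSet_mul_reflEquiv {α : V} (hα : α ∈ S) (u : V ≃ₗ[ℝ] V) :
    Set.MapsTo (preRefl α) (invSet R S (u * reflEquiv α) \ {α}) (invSet R S u \ {α}) := by
  rintro β ⟨⟨hβ, hpos, hneg⟩, hβα : β ≠ α⟩
  refine ⟨⟨hR.reflect_mem α (hS.subset hα) β hβ, hS.nonnegComb_preRefl hR hα hβ hpos hβα, hneg⟩,
    fun h => ?_⟩
  have hβ' : β = -α := by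
    rw [← preRefl_preRefl α β, Set.mem_singleton_iff.mp h, preRefl_self]
  exact hS.not_nonnegComb_neg hR hβ hpos (by rw [hβ', neg_neg]; exact nonnegComb_of_mem hα)

lemma ncard_invSet_mul_reflEquiv_diff {α : V} (hα : α ∈ S) (u : V ≃ₗ[ℝ] V) :
    (invSet R S (u * reflEquiv α) \ {α}).ncard = (invSet R S u \ {α}).ncard := by
  have hfin : ∀ w, (invSet R S w \ {α}).Finite := fun w => hR.finite.subset fun β h => h.1.1
  have hinj : Function.Injective (preRefl α) := (reflEquiv α).injective
  refine le_antisymm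
    (Set.ncard_le_ncard_of_injOn _ (mapsTo_preRefl_invSet_mul_reflEquiv hR hS hα u)
      hinj.injOn (hfin u))
    (Set.ncard_le_ncard_of_injOn _ ?_ hinj.injOn (hfin _))
  have h := mapsTo_preRefl_invSet_mul_reflEquiv hR hS hα (u * reflEquiv α)
  rwa [mul_reflEquiv_mul_reflEquiv] at h

lemma invLength_le_invLength_mul_reflEquiv_add_one {α : V} (hα : α ∈ S) (u : V ≃ₗ[ℝ] V) :
    invLength R S u ≤ invLength R S (u * reflEquiv α) + 1 :=
  calc invLength R S u ≤ (invSet R S u \ {α}).ncard + ({α} : Set V).ncard :=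
        Set.ncard_le_ncard_sdiff_add_ncard _ _
    _ = (invSet R S (u * reflEquiv α) \ {α}).ncard + 1 := by
        rw [ncard_invSet_mul_reflEquiv_diff hR hS hα, Set.ncard_singleton]
    _ ≤ invLength R S (u * reflEquiv α) + 1 := by
        gcongr
        exact Set.ncard_sdiff_singleton_le _ _

lemma invLength_mul_reflEquiv_add_one {α : V} (hα : α ∈ S) {u : V ≃ₗ[ℝ] V}
    (hneg : NonnegComb S (-(u α))) : invLength R S (u * reflEquiv α) + 1 = invLength R S u := by
  have hαR := hS.subset hα
  have hfin : ∀ w, (invSet R S w).Finite := fun w => hR.finite.subset fun β h => h.1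
  have hmem : α ∈ invSet R S u := ⟨hαR, nonnegComb_of_mem hα, hneg⟩
  have hnmem : α ∉ invSet R S (u * reflEquiv α) := fun ⟨_, _, h⟩ => by
    rw [LinearEquiv.mul_apply, reflEquiv_apply, preRefl_self, map_neg, neg_neg] at h
    have huα := eq_zero_of_nonnegComb_of_nonnegComb_neg hS.indep h hneg
    exact hR.ne_zero α hαR ((LinearEquiv.map_eq_zero_iff u).mp huα)
  rw [invLength_eq_ncard_invSet, invLength_eq_ncard_invSet,
    ← Set.ncard_sdiff_singleton_add_one hmem (hfin u), ← ncard_invSet_mul_reflEquiv_diff hR hS hα,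
    Set.sdiff_singleton_eq_self hnmem]

end InvSet

section Exchange

variable {R S : Set V} (hR : IsRootSystem R) (hS : IsBase R S)
include hR hS

/-- Induction on `ℓ(u)`: pick a simple root `α` with `u α < 0`; if `γ ≠ α`, the root
`s_α γ` is positive, `u s_α` is shorter than `u`, and `(u s_α) s_{s_α γ} = (u s_γ) s_α`. -/
lemma invLength_mul_reflEquiv_lt {u : V ≃ₗ[ℝ] V} (hu : u ∈ WeylGroup R) {γ : V} (hγ : γ ∈ R)
    (hpos : NonnegComb S γ) (hneg : NonnegComb S (-(u γ))) :
    invLength R S (u * reflEquiv γ) < invLength R S u := by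
  induction hn : invLength R S u using Nat.strong_induction_on generalizing u γ with
  | _ n ih =>
  obtain ⟨α, hα, hαneg⟩ := hS.exists_simple_nonnegComb_neg hR hu hγ hpos hneg
  have hshorter := invLength_mul_reflEquiv_add_one hR hS hα hαneg
  rcases eq_or_ne γ α with rfl | hγα
  · omega
  have hαR := hS.subset hα
  have hu' : u * reflEquiv α ∈ WeylGroup R := mul_mem hu (reflEquiv_mem_weylGroup hαR)
  have hγ' : (u * reflEquiv α) (preRefl α γ) = u γ := by
    rw [LinearEquiv.mul_apply, reflEquiv_apply, preRefl_preRefl]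
  have hconj : u * reflEquiv α * reflEquiv (preRefl α γ) = u * reflEquiv γ * reflEquiv α := by
    simp only [reflEquiv_preRefl, ← mul_assoc]
    rw [mul_reflEquiv_mul_reflEquiv]
  have hih := ih _ (by omega) hu' (hR.reflect_mem α hαR γ hγ)
    (hS.nonnegComb_preRefl hR hα hγ hpos hγα) (by rwa [hγ']) rfl
  have hle := invLength_le_invLength_mul_reflEquiv_add_one hR hS hα (u * reflEquiv γ)
  rw [hconj] at hih
  omega

lemma invLength_lt_invLength_mul_reflEquiv {u : V ≃ₗ[ℝ] V} (hu : u ∈ WeylGroup R) {γ : V}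
    (hγ : γ ∈ R) (hpos : NonnegComb S γ) (hupos : NonnegComb S (u γ)) :
    invLength R S u < invLength R S (u * reflEquiv γ) := by
  have h := invLength_mul_reflEquiv_lt hR hS (mul_mem hu (reflEquiv_mem_weylGroup hγ)) hγ hpos
    (by rwa [LinearEquiv.mul_apply, reflEquiv_apply, preRefl_self, map_neg, neg_neg])
  rwa [mul_reflEquiv_mul_reflEquiv] at h

end Exchange

lemma reflEquiv_mul_eq_mul_reflEquiv_symm {R : Set V} {x : V ≃ₗ[ℝ] V} (hx : x ∈ WeylGroup R)
    (α : V) : reflEquiv α * x = x * reflEquiv (x.symm α) := by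
  simpa only [LinearEquiv.apply_symm_apply] using
    reflEquiv_map_mul (inner_map_map_of_mem_weylGroup hx) (x.symm α)

lemma invLength_lt_invLength_reflEquiv_mul {R S : Set V} (hR : IsRootSystem R) (hS : IsBase R S)
    {x : V ≃ₗ[ℝ] V} (hx : x ∈ WeylGroup R) {α : V} (hα : α ∈ S)
    (hpos : NonnegComb S (x.symm α)) : invLength R S x < invLength R S (reflEquiv α * x) := by
  rw [reflEquiv_mul_eq_mul_reflEquiv_symm hx]
  exact invLength_lt_invLength_mul_reflEquiv hR hS hx
    (symm_map_mem_of_mem_weylGroup hR hx (hS.subset hα)) hpos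
    (by rw [LinearEquiv.apply_symm_apply]; exact nonnegComb_of_mem hα)

lemma BruhatLE.mem_weylGroup {R S : Set V} {u x : V ≃ₗ[ℝ] V} (h : BruhatLE R S u x)
    (hu : u ∈ WeylGroup R) : x ∈ WeylGroup R := by
  induction h with
  | refl => exact hu
  | tail _ hstep ih =>
    obtain ⟨t, ⟨γ, hγ, ht⟩, rfl, -⟩ := hstep
    rw [reflEquiv_eq_of_forall ht]
    exact mul_mem ih (reflEquiv_mem_weylGroup hγ)

lemma bruhatStep_reflEquiv_mul {R S : Set V} (hR : IsRootSystem R) {x : V ≃ₗ[ℝ] V}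
    (hx : x ∈ WeylGroup R) {α : V} (hα : α ∈ R)
    (hlt : invLength R S x < invLength R S (reflEquiv α * x)) :
    BruhatStep R S x (reflEquiv α * x) :=
  ⟨_, ⟨x.symm α, symm_map_mem_of_mem_weylGroup hR hx hα, fun _ => rfl⟩,
    reflEquiv_mul_eq_mul_reflEquiv_symm hx α, hlt⟩

section Bruhat

variable {R S : Set V} (hR : IsRootSystem R) (hS : IsBase R S)
include hR hS

lemma BruhatStep.exists_nonnegComb {x y : V ≃ₗ[ℝ] V} (h : BruhatStep R S x y) :
    ∃ γ ∈ R, NonnegComb S γ ∧ y = x * reflEquiv γ ∧ invLength R S x < invLength R S y := by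
  obtain ⟨t, ⟨γ, hγ, ht⟩, rfl, hlt⟩ := h
  rw [reflEquiv_eq_of_forall ht] at hlt ⊢
  rcases hS.pos_or_neg γ hγ with hpos | hneg
  · exact ⟨γ, hγ, hpos, rfl, hlt⟩
  · exact ⟨-γ, neg_mem_of_isRootSystem hR hγ, hneg, by rw [reflEquiv_neg], hlt⟩

lemma BruhatStep.reflEquiv_mul {α : V} (hα : α ∈ S) {x y : V ≃ₗ[ℝ] V} (hx : x ∈ WeylGroup R)
    (h : BruhatStep R S x y) :
    reflEquiv α * x = y ∨ BruhatStep R S (reflEquiv α * x) (reflEquiv α * y) := by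
  obtain ⟨γ, hγ, hpos, rfl, hlt⟩ := h.exists_nonnegComb hR hS
  have hxγ := map_mem_of_mem_weylGroup hR hx hγ
  have hxpos : NonnegComb S (x γ) := (hS.pos_or_neg _ hxγ).resolve_right fun hneg =>
    (invLength_mul_reflEquiv_lt hR hS hx hγ hpos hneg).not_gt hlt
  rcases eq_or_ne (x γ) α with hxα | hxα
  · left
    rw [← hxα]
    exact reflEquiv_map_mul (inner_map_map_of_mem_weylGroup hx) γ
  · right
    rw [← mul_assoc]
    exact ⟨_, ⟨γ, hγ, fun _ => rfl⟩, rfl, invLength_lt_invLength_mul_reflEquiv hR hS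
      (mul_mem (reflEquiv_mem_weylGroup (hS.subset hα)) hx) hγ hpos
      (hS.nonnegComb_preRefl hR hα hxγ hxpos hxα)⟩

/-- The lifting property of the Bruhat order. -/
lemma BruhatLE.reflEquiv_mul {α : V} (hα : α ∈ S) {u w : V ≃ₗ[ℝ] V} (hu : u ∈ WeylGroup R)
    (h : BruhatLE R S u w) :
    BruhatLE R S (reflEquiv α * u) w ∨ BruhatLE R S (reflEquiv α * u) (reflEquiv α * w) := by
  induction h with
  | refl => exact Or.inr .refl
  | @tail x y hux hxy ih =>
    rcases ih with h | h
    · exact Or.inl (h.tail hxy)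
    · rcases hxy.reflEquiv_mul hR hS hα (BruhatLE.mem_weylGroup hux hu) with heq | hstep
      · exact Or.inl (heq ▸ h)
      · exact Or.inr (h.tail hstep)

end Bruhat

theorem inversion_stability_under_bruhat_general
    {R S : Set V} (hR : IsRootSystem R) (hS : IsBase R S)
    {w : V ≃ₗ[ℝ] V} (hw : w ∈ WeylGroup R)
    {β : V}
    (hall : ∀ v : V ≃ₗ[ℝ] V, v ∈ WeylGroup R → BruhatLE R S v w →
      v.symm β ∈ R ∧ NonnegComb S (v.symm β))
    {α : V} (hα : α ∈ S) {sα : V ≃ₗ[ℝ] V} (hsα : ∀ x, sα x = preRefl α x)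
    (hlen : invLength R S (sα * w) + 1 = invLength R S w) :
    β ≠ α ∧ ∀ v' : V ≃ₗ[ℝ] V, v' ∈ WeylGroup R → BruhatLE R S v' (sα * w) →
      (v'.symm β ∈ R ∧ NonnegComb S (v'.symm β)) ∧
      (v'.symm (preRefl α β) ∈ R ∧ NonnegComb S (v'.symm (preRefl α β))) := by
  obtain rfl := reflEquiv_eq_of_forall hsα
  have hαR := hS.subset hα
  have hstep : BruhatStep R S (reflEquiv α * w) w := by
    simpa only [reflEquiv_mul_reflEquiv_mul] using bruhatStep_reflEquiv_mul hR
      (mul_mem (reflEquiv_mem_weylGroup hαR) hw) hαR (by rw [reflEquiv_mul_reflEquiv_mul]; omega)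
  refine ⟨?_, fun v hv hle => ⟨hall v hv (hle.tail hstep), ?_⟩⟩
  · rintro rfl
    have := invLength_lt_invLength_reflEquiv_mul hR hS hw hα (hall w hw .refl).2
    omega
  · have hle' : BruhatLE R S (reflEquiv α * v) w := by
      rcases hle.reflEquiv_mul hR hS hα hv with h | h
      · exact h.tail hstep
      · rwa [reflEquiv_mul_reflEquiv_mul] at h
    have hsymm : (reflEquiv α * v).symm β = v.symm (preRefl α β) := rfl
    simpa only [hsymm] using hall _ (mul_mem (reflEquiv_mem_weylGroup hαR) hv) hle'

/-- If `β ∈ R⁺` satisfies `v⁻¹(β) ∈ R⁺` for every `v ≤ w` in Bruhat order,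
and `α` is a simple root with `ℓ(s_α w) = ℓ(w) - 1`, then `β ≠ α` and for every
`v' ≤ s_α w`, both `v'⁻¹(β)` and `v'⁻¹(s_α(β))` are positive roots. -/
theorem inversion_stability_under_bruhat
    {R S : Set V} (hR : IsRootSystem R) (hS : IsBase R S)
    {w : V ≃ₗ[ℝ] V} (hw : w ∈ WeylGroup R)
    {β : V} (hβ : β ∈ R) (hβpos : NonnegComb S β)
    (hall : ∀ v : V ≃ₗ[ℝ] V, v ∈ WeylGroup R → BruhatLE R S v w →
      v.symm β ∈ R ∧ NonnegComb S (v.symm β))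
    {α : V} (hα : α ∈ S) {sα : V ≃ₗ[ℝ] V} (hsα : ∀ x, sα x = preRefl α x)
    (hlen : invLength R S (sα * w) + 1 = invLength R S w) :
    β ≠ α ∧ ∀ v' : V ≃ₗ[ℝ] V, v' ∈ WeylGroup R → BruhatLE R S v' (sα * w) →
      (v'.symm β ∈ R ∧ NonnegComb S (v'.symm β)) ∧
      (v'.symm (preRefl α β) ∈ R ∧ NonnegComb S (v'.symm (preRefl α β))) :=
  inversion_stability_under_bruhat_general hR hS hw hall hα hsα hlen
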